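/- arXiv:1106.4454 — 3 statements merged into one kernel-verified Lean document; each statement's English description precedes it below -/
import Mathlib

section
/- Let T be a tournament on a finite vertex set, let k be a nonnegative integer, let A' be a DESC-set of T with |A'| ≤ k, and let T' = T − A'. Fix a linear order ≻ on the strong components of T' such that whenever some arc of T' goes from a vertex of a strong component A to a vertex of a strong component B ≠ A, then A ≻ B. Let A and B be strong components of T' with A ≻ B, and let W be the set of all vertices lying in strong components C of T' with A ≻ C ≻ B. Then for every vertex a of A and every vertex b of B, the out-degrees in T satisfy d⁺_T(a) − d⁺_T(b) ≥ (|A| + |B|)/2 + |W| − (k + 1). -/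
/-!
Digraphs on a finite vertex type `V` are modelled by their arc sets
`D : Finset (V × V)`, where `(x, y) ∈ D` means there is an arc from `x` to `y`.
-/

namespace DescPaper

variable {V : Type*} [Fintype V] [DecidableEq V]

/-- The out-degree of `x` in the digraph `D`. -/
def outDeg (D : Finset (V × V)) (x : V) : ℕ :=
  (D.filter (fun a => a.1 = x)).card

/-- The in-degree of `x` in the digraph `D`. -/
def inDeg (D : Finset (V × V)) (x : V) : ℕ :=
  (D.filter (fun a => a.2 = x)).card

/-- The number of arcs of `D` from `x` to a vertex of `Y`. -/
def outDegInto (D : Finset (V × V)) (x : V) (Y : Finset V) : ℕ :=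
  (D.filter (fun a => a.1 = x ∧ a.2 ∈ Y)).card

/-- The subgraph of `D` induced by the vertex set `X`. -/
def induce (D : Finset (V × V)) (X : Finset V) : Finset (V × V) :=
  D.filter (fun a => a.1 ∈ X ∧ a.2 ∈ X)

/-- Reachability by a directed path in the digraph `D`. -/
def Reach (D : Finset (V × V)) : V → V → Prop :=
  Relation.ReflTransGen (fun u v => (u, v) ∈ D)

/-- The subgraph of `D` induced by `X` is strongly connected. -/
def StronglyConnectedOn (D : Finset (V × V)) (X : Finset V) : Prop :=
  ∀ x ∈ X, ∀ y ∈ X, Reach (induce D X) x y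

/-- `X` is the vertex set of a strong component of `D`:
a maximal (nonempty) vertex set inducing a strongly connected subgraph. -/
def IsStrongComponent (D : Finset (V × V)) (X : Finset V) : Prop :=
  X.Nonempty ∧ StronglyConnectedOn D X ∧
    ∀ Y : Finset V, X ⊆ Y → StronglyConnectedOn D Y → Y = X

/-- The digraph `D` is balanced: every vertex has equal in- and out-degree. -/
def IsBalanced (D : Finset (V × V)) : Prop :=
  ∀ x : V, outDeg D x = inDeg D x

/-- The subgraph of `D` induced by `X` is Eulerian:
strongly connected and balanced. -/
def EulerianOn (D : Finset (V × V)) (X : Finset V) : Prop :=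
  StronglyConnectedOn D X ∧ IsBalanced (induce D X)

/-- `A'` is a DESC-set of `D`: a set of arcs of `D` such that every strong
component of `D - A'` is Eulerian. -/
def IsDESC (D A' : Finset (V × V)) : Prop :=
  A' ⊆ D ∧ ∀ X : Finset V, IsStrongComponent (D \ A') X → EulerianOn (D \ A') X

/-- `desc D` is the minimum size of a DESC-set of `D`. -/
noncomputable def desc (D : Finset (V × V)) : ℕ :=
  sInf {n | ∃ A' : Finset (V × V), IsDESC D A' ∧ A'.card = n}

/-- `T` is a tournament: no loops, and for every pair of distinct vertices
exactly one of the two possible arcs is present. -/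
def IsTournament (T : Finset (V × V)) : Prop :=
  (∀ x : V, (x, x) ∉ T) ∧ ∀ x y : V, x ≠ y → ((x, y) ∈ T ↔ (y, x) ∉ T)

/-- `dstar A' X Y` is the number of arcs of `A'` with one endpoint in `X`
and the other endpoint in `Y` (in either direction). -/
def dstar (A' : Finset (V × V)) (X Y : Finset V) : ℕ :=
  (A'.filter (fun a => (a.1 ∈ X ∧ a.2 ∈ Y) ∨ (a.1 ∈ Y ∧ a.2 ∈ X))).card

end DescPaper

/-!
Write `d⁺_T(a) - d⁺_T(b) = ∑ᵥ ([a → v] - [b → v])`. Since `A ≻ B`, the digraph `T' = T - A'`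
has no path from `b` to `a`, and none from `b` to a vertex of `W` or from a vertex of `W` to `a`.
So, apart from arcs of `A'` at `a` or leaving `b`, every vertex `v ∉ A ∪ B` contributes at
least `[v ∈ W]` to the sum, every `v ∈ B` at least `1 - [b → v]`, and every `v ∈ A` at least
`[a → v]`. As `a` and `b` are balanced in the Eulerian digraphs `T'[A]` and `T'[B]`, `a` beats
at least about half of `A` and `b` at most about half of `B`; this gives `|A| / 2` and `|B| / 2`.
Each arc of `A'` is charged at most once, except the arc `b → a`, which is charged twice;
this is the `k + 1`.
-/

namespace DescPaper

open Finset

section Digraph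

variable {V : Type*} [DecidableEq V]

def arcInd (D : Finset (V × V)) (x y : V) : ℤ := if (x, y) ∈ D then 1 else 0

lemma arcInd_nonneg (D : Finset (V × V)) (x y : V) : 0 ≤ arcInd D x y := by
  unfold arcInd; split_ifs <;> norm_num

lemma arcInd_le_one (D : Finset (V × V)) (x y : V) : arcInd D x y ≤ 1 := by
  unfold arcInd; split_ifs <;> norm_num

lemma arcInd_mono {D E : Finset (V × V)} (h : D ⊆ E) (x y : V) :
    arcInd D x y ≤ arcInd E x y := by
  unfold arcInd; split_ifs with hD hE <;> first | exact absurd (h hD) hE | norm_num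

lemma arcInd_le_arcInd_sdiff_add (D E : Finset (V × V)) (x y : V) :
    arcInd D x y ≤ arcInd (D \ E) x y + arcInd E x y := by
  unfold arcInd; split_ifs <;> simp_all

lemma arcInd_le_of_notMem_sdiff {D E : Finset (V × V)} {x y : V} (h : (x, y) ∉ D \ E) :
    arcInd D x y ≤ arcInd E x y := by
  simpa [arcInd, h] using arcInd_le_arcInd_sdiff_add D E x y

lemma IsTournament.arcInd_add_arcInd {T : Finset (V × V)} (hT : IsTournament T) {x y : V}
    (hxy : x ≠ y) : arcInd T x y + arcInd T y x = 1 := by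
  have := hT.2 x y hxy
  unfold arcInd; split_ifs <;> simp_all

lemma IsTournament.one_le_arcInd_add_arcInd {T A' : Finset (V × V)} (hT : IsTournament T)
    {x y : V} (hxy : x ≠ y) (h : (y, x) ∉ T \ A') : 1 ≤ arcInd T x y + arcInd A' y x := by
  linarith [hT.arcInd_add_arcInd hxy, arcInd_le_of_notMem_sdiff h]

lemma inDeg_add_outDeg_add_outDeg_le {D : Finset (V × V)} (hloop : ∀ x, (x, x) ∉ D)
    {a b : V} (hab : a ≠ b) : inDeg D a + outDeg D a + outDeg D b ≤ #D + 1 := by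
  have hpt : ∀ e ∈ D, ((if e.2 = a then 1 else 0) + (if e.1 = a then 1 else 0) +
      (if e.1 = b then 1 else 0) : ℕ) ≤ 1 + if e = (b, a) then 1 else 0 := by
    rintro ⟨x, y⟩ he
    have : x = a → y ≠ a := by rintro rfl rfl; exact hloop _ he
    simp only [Prod.mk.injEq]
    split_ifs <;> simp_all
  calc inDeg D a + outDeg D a + outDeg D b
      = ∑ e ∈ D, ((if e.2 = a then 1 else 0) + (if e.1 = a then 1 else 0) +
          (if e.1 = b then 1 else 0) : ℕ) := by
        simp only [inDeg, outDeg, card_filter, sum_add_distrib]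
    _ ≤ ∑ e ∈ D, (1 + if e = (b, a) then 1 else 0) := sum_le_sum hpt
    _ ≤ #D + 1 := by
        rw [sum_add_distrib, sum_ite_eq']
        simp only [sum_const, smul_eq_mul, mul_one]
        split_ifs <;> omega

lemma StronglyConnectedOn.reach {D : Finset (V × V)} {X : Finset V}
    (h : StronglyConnectedOn D X) {x y : V} (hx : x ∈ X) (hy : y ∈ X) : Reach D x y :=
  Relation.ReflTransGen.mono (fun _ _ huw => (mem_filter.1 huw).1) _ _ (h x hx y hy)

lemma Reach.induce_mono {D : Finset (V × V)} {X Y : Finset V} (hXY : X ⊆ Y) {x y : V}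
    (h : Reach (induce D X) x y) : Reach (induce D Y) x y :=
  Relation.ReflTransGen.mono (fun _ _ huw => by
    simp only [induce, mem_filter] at huw ⊢; exact ⟨huw.1, hXY huw.2.1, hXY huw.2.2⟩) _ _ h

lemma StronglyConnectedOn.union {D : Finset (V × V)} {X Y : Finset V}
    (hX : StronglyConnectedOn D X) (hY : StronglyConnectedOn D Y) {v : V} (hvX : v ∈ X)
    (hvY : v ∈ Y) : StronglyConnectedOn D (X ∪ Y) := by
  have hto : ∀ x ∈ X ∪ Y, Reach (induce D (X ∪ Y)) x v := by
    intro x hx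
    rcases mem_union.1 hx with h | h
    · exact (hX x h v hvX).induce_mono subset_union_left
    · exact (hY x h v hvY).induce_mono subset_union_right
  have hfrom : ∀ y ∈ X ∪ Y, Reach (induce D (X ∪ Y)) v y := by
    intro y hy
    rcases mem_union.1 hy with h | h
    · exact (hX v hvX y h).induce_mono subset_union_left
    · exact (hY v hvY y h).induce_mono subset_union_right
  exact fun x hx y hy => (hto x hx).trans (hfrom y hy)

lemma IsStrongComponent.eq_of_mem {D : Finset (V × V)} {C₁ C₂ : Finset V}
    (h₁ : IsStrongComponent D C₁) (h₂ : IsStrongComponent D C₂) {v : V} (hv₁ : v ∈ C₁)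
    (hv₂ : v ∈ C₂) : C₁ = C₂ := by
  have hsc := h₁.2.1.union h₂.2.1 hv₁ hv₂
  exact (h₁.2.2 _ subset_union_left hsc).symm.trans (h₂.2.2 _ subset_union_right hsc)

end Digraph

section Degrees

variable {V : Type*} [Fintype V] [DecidableEq V]

lemma outDeg_eq_sum_arcInd (D : Finset (V × V)) (x : V) :
    (outDeg D x : ℤ) = ∑ v, arcInd D x v := by
  have : outDeg D x = #{v | (x, v) ∈ D} :=
    card_bij' (fun e _ => e.2) (fun v _ => (x, v)) (by aesop) (by aesop) (by aesop) (by aesop)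
  simp [this, arcInd]

lemma inDeg_eq_sum_arcInd (D : Finset (V × V)) (x : V) :
    (inDeg D x : ℤ) = ∑ v, arcInd D v x := by
  have : inDeg D x = #{v | (v, x) ∈ D} :=
    card_bij' (fun e _ => e.1) (fun v _ => (v, x)) (by aesop) (by aesop) (by aesop) (by aesop)
  simp [this, arcInd]

lemma sum_arcInd_induce_left (D : Finset (V × V)) {X : Finset V} {x : V} (hx : x ∈ X) :
    ∑ v, arcInd (induce D X) x v = ∑ v ∈ X, arcInd D x v := by
  simp only [arcInd, induce, mem_filter, hx, ← sum_filter]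
  congr 1; ext; simp [and_comm]

lemma sum_arcInd_induce_right (D : Finset (V × V)) {X : Finset V} {x : V} (hx : x ∈ X) :
    ∑ v, arcInd (induce D X) v x = ∑ v ∈ X, arcInd D v x := by
  simp only [arcInd, induce, mem_filter, hx, ← sum_filter]
  congr 1; ext; simp [and_comm]

lemma IsBalanced.sum_arcInd_sub_eq_zero {D : Finset (V × V)} {X : Finset V}
    (h : IsBalanced (induce D X)) {x : V} (hx : x ∈ X) :
    ∑ v ∈ X, (arcInd D x v - arcInd D v x) = 0 := by
  have := congrArg (fun n : ℕ => (n : ℤ)) (h x)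
  simp only [outDeg_eq_sum_arcInd, inDeg_eq_sum_arcInd, sum_arcInd_induce_left D hx,
    sum_arcInd_induce_right D hx] at this
  rw [sum_sub_distrib, this, sub_self]

end Degrees

section Counting

variable {V : Type*} [DecidableEq V]

def outGap (T : Finset (V × V)) (a b v : V) : ℤ := arcInd T a v - arcInd T b v

def charge (A' : Finset (V × V)) (a b v : V) : ℤ :=
  arcInd A' v a + arcInd A' a v + arcInd A' b v

variable {T A' : Finset (V × V)} {a b : V}

lemma IsTournament.outGap_add_charge_nonneg (hT : IsTournament T) {v : V} (hva : v ≠ a)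
    (h : (b, v) ∉ T \ A' ∨ (v, a) ∉ T \ A') : 0 ≤ outGap T a b v + charge A' a b v := by
  have := arcInd_nonneg T a v; have := arcInd_nonneg A' v a; have := arcInd_nonneg A' a v
  have := arcInd_nonneg A' b v; have := arcInd_le_one T b v
  unfold outGap charge
  rcases h with h | h
  · linarith [arcInd_le_of_notMem_sdiff h]
  · linarith [hT.one_le_arcInd_add_arcInd (Ne.symm hva) h]

lemma IsTournament.one_le_outGap_add_charge (hT : IsTournament T) {v : V} (hva : v ≠ a)
    (hb : (b, v) ∉ T \ A') (ha : (v, a) ∉ T \ A') : 1 ≤ outGap T a b v + charge A' a b v := by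
  have := arcInd_nonneg A' a v
  unfold outGap charge
  linarith [arcInd_le_of_notMem_sdiff hb, hT.one_le_arcInd_add_arcInd (Ne.symm hva) ha]

lemma IsTournament.card_le_sum_outside (hT : IsTournament T) {R W : Finset V} (hWR : W ⊆ R)
    (haR : a ∉ R) (hR : ∀ v ∈ R, (b, v) ∉ T \ A' ∨ (v, a) ∉ T \ A')
    (hW : ∀ v ∈ W, (b, v) ∉ T \ A' ∧ (v, a) ∉ T \ A') :
    (#W : ℤ) ≤ ∑ v ∈ R, (outGap T a b v + charge A' a b v) := by
  have hva : ∀ v ∈ R, v ≠ a := fun v hv h => haR (h ▸ hv)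
  calc (#W : ℤ) = ∑ v ∈ W, 1 := by simp
    _ ≤ ∑ v ∈ W, (outGap T a b v + charge A' a b v) := sum_le_sum fun v hv =>
        hT.one_le_outGap_add_charge (hva v (hWR hv)) (hW v hv).1 (hW v hv).2
    _ ≤ ∑ v ∈ R, (outGap T a b v + charge A' a b v) := sum_le_sum_of_subset_of_nonneg hWR
        fun v hv _ => hT.outGap_add_charge_nonneg (hva v hv) (hR v hv)

variable [Fintype V]

lemma IsTournament.card_source_le_sum (hT : IsTournament T) {X : Finset V}
    (hbal : IsBalanced (induce (T \ A') X)) (ha : a ∈ X) (hX : ∀ v ∈ X, (b, v) ∉ T \ A') :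
    (#X : ℤ) ≤ 2 * ∑ v ∈ X, (outGap T a b v + charge A' a b v) + 1 := by
  -- Summed over `X`, the `T \ A'` terms vanish because `a` is balanced in `X`.
  have hpt : ∀ v ∈ X, 1 - (if v = a then 1 else 0) +
      (arcInd (T \ A') a v - arcInd (T \ A') v a) ≤ 2 * (outGap T a b v + charge A' a b v) := by
    intro v hv
    have := arcInd_le_of_notMem_sdiff (hX v hv)
    have := arcInd_nonneg A' v a; have := arcInd_nonneg A' a v
    unfold outGap charge
    obtain rfl | hva := eq_or_ne v a
    · have := arcInd_nonneg T v v; simp only [if_true]; linarith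
    · have := hT.arcInd_add_arcInd (Ne.symm hva)
      have := arcInd_le_arcInd_sdiff_add T A' v a
      have := arcInd_mono (sdiff_subset (s := T) (t := A')) a v
      simp only [hva, if_false]; linarith
  calc (#X : ℤ)
      = ∑ v ∈ X, (1 - (if v = a then 1 else 0) +
          (arcInd (T \ A') a v - arcInd (T \ A') v a)) + 1 := by
        rw [sum_add_distrib, hbal.sum_arcInd_sub_eq_zero ha, sum_sub_distrib, sum_ite_eq']
        simp [ha]
    _ ≤ 2 * ∑ v ∈ X, (outGap T a b v + charge A' a b v) + 1 := by
        rw [mul_sum]; gcongr with v hv; exact hpt v hv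

lemma IsTournament.card_sink_add_one_le_sum (hT : IsTournament T) {Y : Finset V}
    (hbal : IsBalanced (induce (T \ A') Y)) (hb : b ∈ Y) (ha : a ∉ Y)
    (hY : ∀ v ∈ Y, (v, a) ∉ T \ A') :
    (#Y : ℤ) + 1 ≤ 2 * ∑ v ∈ Y, (outGap T a b v + charge A' a b v) := by
  have hpt : ∀ v ∈ Y, 1 + (if v = b then 1 else 0) -
      (arcInd (T \ A') b v - arcInd (T \ A') v b) ≤ 2 * (outGap T a b v + charge A' a b v) := by
    intro v hv
    have hva : v ≠ a := by rintro rfl; exact ha hv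
    have := hT.one_le_arcInd_add_arcInd (Ne.symm hva) (hY v hv)
    have := arcInd_nonneg A' v a; have := arcInd_nonneg A' a v; have := arcInd_nonneg A' b v
    unfold outGap charge
    obtain rfl | hvb := eq_or_ne v b
    · have : arcInd T v v = 0 := by simp [arcInd, hT.1]
      simp only [if_true]; linarith
    · have := hT.arcInd_add_arcInd hvb
      have := arcInd_le_arcInd_sdiff_add T A' b v
      have := arcInd_mono (sdiff_subset (s := T) (t := A')) v b
      simp only [hvb, if_false]; linarith
  calc (#Y : ℤ) + 1
      = ∑ v ∈ Y, (1 + (if v = b then 1 else 0) -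
          (arcInd (T \ A') b v - arcInd (T \ A') v b)) := by
        rw [sum_sub_distrib, hbal.sum_arcInd_sub_eq_zero hb, sum_add_distrib, sum_ite_eq']
        simp [hb]
    _ ≤ 2 * ∑ v ∈ Y, (outGap T a b v + charge A' a b v) := by
        rw [mul_sum]; exact sum_le_sum hpt

lemma sum_outGap_add_charge_le (hloop : ∀ x, (x, x) ∉ A') (hab : a ≠ b) :
    ∑ v, (outGap T a b v + charge A' a b v) ≤ (outDeg T a : ℤ) - outDeg T b + #A' + 1 := by
  have hcard : (inDeg A' a + outDeg A' a + outDeg A' b : ℤ) ≤ #A' + 1 := by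
    exact_mod_cast inDeg_add_outDeg_add_outDeg_le hloop hab
  simp only [outGap, charge, sum_add_distrib, sum_sub_distrib, ← outDeg_eq_sum_arcInd,
    ← inDeg_eq_sum_arcInd]
  linarith

theorem IsTournament.card_add_card_add_two_mul_card_le (hT : IsTournament T) (hA'T : A' ⊆ T)
    {X Y W : Finset V} (hX : EulerianOn (T \ A') X) (hY : EulerianOn (T \ A') Y)
    (ha : a ∈ X) (hb : b ∈ Y) (hba : ¬ Reach (T \ A') b a)
    (hW : ∀ v ∈ W, ¬ Reach (T \ A') b v ∧ ¬ Reach (T \ A') v a) :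
    (#X + #Y + 2 * #W : ℤ) ≤ 2 * ((outDeg T a : ℤ) - outDeg T b + #A' + 1) := by
  have hXa : ∀ v ∈ X, Reach (T \ A') v a := fun v hv => hX.1.reach hv ha
  have hYb : ∀ v ∈ Y, Reach (T \ A') b v := fun v hv => hY.1.reach hb hv
  have hXY : Disjoint X Y :=
    disjoint_left.2 fun v hvX hvY => hba ((hYb v hvY).trans (hXa v hvX))
  have hWXY : W ⊆ (X ∪ Y)ᶜ := by
    intro v hv
    simp only [mem_compl, mem_union, not_or]
    exact ⟨fun h => (hW v hv).2 (hXa v h), fun h => (hW v hv).1 (hYb v h)⟩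
  have hsource := hT.card_source_le_sum hX.2 ha fun v hv hbv => hba (.head hbv (hXa v hv))
  have hsink := hT.card_sink_add_one_le_sum hY.2 hb (disjoint_left.1 hXY ha)
    fun v hv hva => hba ((hYb v hv).tail hva)
  have hrest := hT.card_le_sum_outside hWXY (by simp [ha])
    (fun v _ => not_and_or.1 fun h => hba ((Relation.ReflTransGen.single h.1).tail h.2))
    fun v hv => ⟨fun h => (hW v hv).1 (.single h), fun h => (hW v hv).2 (.single h)⟩
  have htotal := sum_outGap_add_charge_le (T := T) (fun x hx => hT.1 x (hA'T hx))
    fun hab : a = b => disjoint_left.1 hXY ha (hab ▸ hb)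
  rw [← sum_add_sum_compl (X ∪ Y), sum_union hXY] at htotal
  linarith

end Counting

section ComponentOrder

variable {V : Type*} [Fintype V] [DecidableEq V]

lemma exists_isStrongComponent_mem (D : Finset (V × V)) (v : V) :
    ∃ C, IsStrongComponent D C ∧ v ∈ C := by
  have hsingle : StronglyConnectedOn D {v} := by
    simp only [StronglyConnectedOn, mem_singleton]
    rintro x rfl y rfl
    exact Relation.ReflTransGen.refl
  obtain ⟨M, ⟨hvM, hM⟩, hmax⟩ := Set.Finite.exists_maximalFor id
    {X : Finset V | v ∈ X ∧ StronglyConnectedOn D X} (Set.toFinite _)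
    ⟨{v}, mem_singleton_self v, hsingle⟩
  exact ⟨M, ⟨⟨v, hvM⟩, hM, fun Y hMY hY => (hmax ⟨hMY hvM, hY⟩ hMY).antisymm hMY⟩, hvM⟩

variable {D : Finset (V × V)} {ord : Finset V → Finset V → Prop}
  (hirr : ∀ C, IsStrongComponent D C → ¬ ord C C)
  (htrans : ∀ C₁ C₂ C₃, IsStrongComponent D C₁ → IsStrongComponent D C₂ →
    IsStrongComponent D C₃ → ord C₁ C₂ → ord C₂ C₃ → ord C₁ C₃)
  (hcompat : ∀ C₁ C₂, IsStrongComponent D C₁ → IsStrongComponent D C₂ → C₁ ≠ C₂ →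
    (∃ u ∈ C₁, ∃ v ∈ C₂, (u, v) ∈ D) → ord C₁ C₂)
include htrans hcompat

lemma eq_or_ord_of_reach {C₁ C₂ : Finset V} (h₁ : IsStrongComponent D C₁)
    (h₂ : IsStrongComponent D C₂) {u v : V} (hu : u ∈ C₁) (hv : v ∈ C₂) (h : Reach D u v) :
    C₁ = C₂ ∨ ord C₁ C₂ := by
  induction h generalizing C₂ with
  | refl => exact .inl (h₁.eq_of_mem h₂ hu hv)
  | @tail w _ _ hwv ih =>
    obtain ⟨C, hC, hwC⟩ := exists_isStrongComponent_mem D w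
    have hstep : C = C₂ ∨ ord C C₂ := by
      by_cases hCC : C = C₂
      · exact .inl hCC
      · exact .inr (hcompat C C₂ hC h₂ hCC ⟨w, hwC, _, hv, hwv⟩)
    rcases ih hC hwC with rfl | h₁C <;> rcases hstep with rfl | hC₂
    exacts [.inl rfl, .inr hC₂, .inr h₁C, .inr (htrans _ _ _ h₁ hC h₂ h₁C hC₂)]

include hirr

lemma not_reach_of_ord ⦃C₁ C₂ : Finset V⦄ (h₁ : IsStrongComponent D C₁)
    (h₂ : IsStrongComponent D C₂) (hord : ord C₁ C₂) ⦃u v : V⦄ (hu : u ∈ C₂) (hv : v ∈ C₁) :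
    ¬ Reach D u v := by
  intro h
  rcases eq_or_ord_of_reach htrans hcompat h₂ h₁ hu hv h with rfl | h'
  exacts [hirr _ h₁ hord, hirr _ h₁ (htrans _ _ _ h₁ h₂ h₁ hord h')]

end ComponentOrder

end DescPaper

open DescPaper

theorem stmt0_general {V : Type*} [Fintype V] [DecidableEq V]
    (T A' : Finset (V × V)) (k : ℕ)
    (hT : IsTournament T) (hDESC : IsDESC T A') (hk : A'.card ≤ k)
    (ord : Finset V → Finset V → Prop)
    (hirr : ∀ C : Finset V, IsStrongComponent (T \ A') C → ¬ ord C C)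
    (htrans : ∀ C₁ C₂ C₃ : Finset V, IsStrongComponent (T \ A') C₁ →
      IsStrongComponent (T \ A') C₂ → IsStrongComponent (T \ A') C₃ →
      ord C₁ C₂ → ord C₂ C₃ → ord C₁ C₃)
    (hcompat : ∀ C₁ C₂ : Finset V, IsStrongComponent (T \ A') C₁ →
      IsStrongComponent (T \ A') C₂ → C₁ ≠ C₂ →
      (∃ u ∈ C₁, ∃ v ∈ C₂, (u, v) ∈ T \ A') → ord C₁ C₂)
    (A B : Finset V)
    (hA : IsStrongComponent (T \ A') A) (hB : IsStrongComponent (T \ A') B)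
    (hAB : ord A B)
    (W : Finset V)
    (hW : ∀ v : V, v ∈ W ↔
      ∃ C : Finset V, IsStrongComponent (T \ A') C ∧ v ∈ C ∧ ord A C ∧ ord C B) :
    ∀ a ∈ A, ∀ b ∈ B,
      ((A.card : ℚ) + B.card) / 2 + W.card - (k + 1)
        ≤ (outDeg T a : ℚ) - outDeg T b := by
  intro a ha b hb
  have hsep := not_reach_of_ord hirr htrans hcompat
  have hW' : ∀ v ∈ W, ¬ Reach (T \ A') b v ∧ ¬ Reach (T \ A') v a := by
    intro v hv
    obtain ⟨C, hC, hvC, hAC, hCB⟩ := (hW v).1 hv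
    exact ⟨hsep hC hB hCB hb hvC, hsep hA hC hAC hvC ha⟩
  have hcount := hT.card_add_card_add_two_mul_card_le hDESC.1 (hDESC.2 A hA) (hDESC.2 B hB)
    ha hb (hsep hA hB hAB hb ha) hW'
  have hcountℚ : ((A.card + B.card + 2 * W.card : ℤ) : ℚ)
      ≤ ((2 * ((outDeg T a : ℤ) - outDeg T b + A'.card + 1) : ℤ) : ℚ) := by
    exact_mod_cast hcount
  have hkℚ : (A'.card : ℚ) ≤ k := by exact_mod_cast hk
  push_cast at hcountℚ
  linarith

/-- Lemma 1 of the paper. -/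
theorem stmt0 {V : Type*} [Fintype V] [DecidableEq V]
    (T A' : Finset (V × V)) (k : ℕ)
    (hT : IsTournament T) (hDESC : IsDESC T A') (hk : A'.card ≤ k)
    (ord : Finset V → Finset V → Prop)
    (hirr : ∀ C : Finset V, IsStrongComponent (T \ A') C → ¬ ord C C)
    (htrans : ∀ C₁ C₂ C₃ : Finset V, IsStrongComponent (T \ A') C₁ →
      IsStrongComponent (T \ A') C₂ → IsStrongComponent (T \ A') C₃ →
      ord C₁ C₂ → ord C₂ C₃ → ord C₁ C₃)
    (htotal : ∀ C₁ C₂ : Finset V, IsStrongComponent (T \ A') C₁ →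
      IsStrongComponent (T \ A') C₂ → C₁ ≠ C₂ → ord C₁ C₂ ∨ ord C₂ C₁)
    (hcompat : ∀ C₁ C₂ : Finset V, IsStrongComponent (T \ A') C₁ →
      IsStrongComponent (T \ A') C₂ → C₁ ≠ C₂ →
      (∃ u ∈ C₁, ∃ v ∈ C₂, (u, v) ∈ T \ A') → ord C₁ C₂)
    (A B : Finset V)
    (hA : IsStrongComponent (T \ A') A) (hB : IsStrongComponent (T \ A') B)
    (hAB : ord A B)
    (W : Finset V)
    (hW : ∀ v : V, v ∈ W ↔
      ∃ C : Finset V, IsStrongComponent (T \ A') C ∧ v ∈ C ∧ ord A C ∧ ord C B) :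
    ∀ a ∈ A, ∀ b ∈ B,
      ((A.card : ℚ) + B.card) / 2 + W.card - (k + 1)
        ≤ (outDeg T a : ℚ) - outDeg T b :=
  stmt0_general T A' k hT hDESC hk ord hirr htrans hcompat A B hA hB hAB W hW
end

section
/- Let T be a tournament on a finite vertex set, let k be a nonnegative integer, let A' be a DESC-set of T with |A'| ≤ k, and let T' = T − A'. Suppose X is a set of vertices of T with |X| ≥ 4k + 3 such that max_{x∈X} d⁺_T(x) − min_{x∈X} d⁺_T(x) ≤ k. Then all vertices of X belong to one and the same strong component of T'. -/
open DescPaper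


/-!
Suppose `y` cannot reach `x` in `T' = T - A'`, and let `S` be the set of vertices that reach `x`
in `T'`; every arc of `T` entering `S` then lies in `A'`. A vertex `x'` of `X ∩ S` beating at least
half of `X ∩ S` dominates almost all of `Sᶜ`, while a vertex `y'` of `X \ S` beating at most half of
`X \ S` sends almost no arcs into `S`, the exceptions being at most `|A'| + 1 ≤ k + 1` arcs of `A'`.
Counting gives `d⁺(x') - d⁺(y') ≥ |X| / 2 - k - 1 > k`, a contradiction. So the vertices of `X` are
pairwise mutually reachable in `T'`, hence lie in one strong component.
-/

namespace DescPaper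

open Finset

variable {V : Type*}

theorem Reach.mono {D E : Finset (V × V)} (h : D ⊆ E) {a b : V} (hab : Reach D a b) :
    Reach E a b :=
  Relation.ReflTransGen.mono (fun _ _ huv => h huv) _ _ hab

section StrongComponent

variable [Fintype V] {D : Finset (V × V)}

open Classical in
noncomputable def strongClass (D : Finset (V × V)) (x : V) : Finset V :=
  {v | Reach D x v ∧ Reach D v x}

theorem mem_strongClass {x v : V} : v ∈ strongClass D x ↔ Reach D x v ∧ Reach D v x := by
  classical
  simp [strongClass]

variable [DecidableEq V]

theorem Reach.induce_strongClass {x u v : V} (huv : Reach D u v) (hu : u ∈ strongClass D x)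
    (hv : v ∈ strongClass D x) : Reach (induce D (strongClass D x)) u v := by
  induction huv using Relation.ReflTransGen.head_induction_on with
  | refl => exact .refl
  | @head a c hac hcv ih =>
    have hc : c ∈ strongClass D x := mem_strongClass.2
      ⟨(mem_strongClass.1 hu).1.tail hac, hcv.trans (mem_strongClass.1 hv).2⟩
    exact .head (mem_filter.2 ⟨hac, hu, hc⟩) (ih hc)

theorem isStrongComponent_strongClass (x : V) : IsStrongComponent D (strongClass D x) := by
  have hx : x ∈ strongClass D x := mem_strongClass.2 ⟨.refl, .refl⟩
  refine ⟨⟨x, hx⟩, fun u hu v hv => ?_, fun Y hxY hY => ?_⟩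
  · exact Reach.induce_strongClass ((mem_strongClass.1 hu).2.trans (mem_strongClass.1 hv).1) hu hv
  · refine Subset.antisymm (fun v hv => mem_strongClass.2 ⟨?_, ?_⟩) hxY
    · exact (hY x (hxY hx) v hv).mono (filter_subset _ _)
    · exact (hY v hv x (hxY hx)).mono (filter_subset _ _)

theorem exists_isStrongComponent_superset {X : Finset V} (hX : X.Nonempty)
    (hreach : ∀ x ∈ X, ∀ y ∈ X, Reach D x y) :
    ∃ C : Finset V, IsStrongComponent D C ∧ X ⊆ C := by
  obtain ⟨x, hx⟩ := hX
  exact ⟨strongClass D x, isStrongComponent_strongClass x,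
    fun v hv => mem_strongClass.2 ⟨hreach x hx v hv, hreach v hv x hx⟩⟩

end StrongComponent

section Degrees

variable [DecidableEq V] {D : Finset (V × V)}

theorem outDeg_eq_outDegInto_add_outDegInto_compl [Fintype V] (u : V) (S : Finset V) :
    outDeg D u = outDegInto D u S + outDegInto D u Sᶜ := by
  rw [outDeg, ← card_filter_add_card_filter_not (fun a : V × V => a.2 ∈ S),
    filter_filter, filter_filter]
  simp only [outDegInto, mem_compl]

theorem outDegInto_mono {u : V} {P S : Finset V} (h : P ⊆ S) :
    outDegInto D u P ≤ outDegInto D u S :=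
  card_le_card fun a ha => by
    simp only [mem_filter] at ha ⊢
    exact ⟨ha.1, ha.2.1, h ha.2.2⟩

theorem outDegInto_le_card (u : V) (Y : Finset V) : outDegInto D u Y ≤ #Y :=
  card_le_card_of_injOn Prod.snd (fun _ ha => (mem_filter.1 ha).2.2)
    fun _ ha _ hb hab => Prod.ext ((mem_filter.1 ha).2.1.trans (mem_filter.1 hb).2.1.symm) hab

theorem outDegInto_le_add_card_sdiff (u : V) (Q Y : Finset V) :
    outDegInto D u Y ≤ outDegInto D u Q + #(Y \ Q) :=
  calc outDegInto D u Y ≤ outDegInto D u Q + outDegInto D u (Y \ Q) := by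
        refine (card_le_card fun a ha => ?_).trans (card_union_le _ _)
        simp only [mem_union, mem_filter, mem_sdiff] at ha ⊢
        tauto
    _ ≤ outDegInto D u Q + #(Y \ Q) := Nat.add_le_add_left (outDegInto_le_card u _) _

theorem sum_outDegInto_eq_card_induce (P : Finset V) :
    ∑ u ∈ P, outDegInto D u P = #(induce D P) := by
  rw [card_eq_sum_card_fiberwise (f := Prod.fst) (t := P) fun a ha => (mem_filter.1 ha).2.1]
  refine sum_congr rfl fun u hu => congrArg card ?_
  ext a
  simp only [induce, mem_filter]
  constructor
  · rintro ⟨haD, rfl, ha⟩; exact ⟨⟨haD, hu, ha⟩, rfl⟩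
  · rintro ⟨⟨haD, -, ha⟩, rfl⟩; exact ⟨haD, rfl, ha⟩

end Degrees

section Tournament

variable {T : Finset (V × V)}

theorem IsTournament.ne_of_mem (hT : IsTournament T) {u v : V} (h : (u, v) ∈ T) : u ≠ v := by
  rintro rfl
  exact hT.1 u h

theorem IsTournament.swap_not_mem (hT : IsTournament T) {u v : V} (h : (u, v) ∈ T) :
    (v, u) ∉ T :=
  (hT.2 u v (hT.ne_of_mem h)).1 h

theorem IsTournament.mem_or_swap_mem (hT : IsTournament T) {u v : V} (huv : u ≠ v) :
    (u, v) ∈ T ∨ (v, u) ∈ T := by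
  by_cases h : (u, v) ∈ T
  · exact .inl h
  · exact .inr ((hT.2 v u huv.symm).2 h)

variable [DecidableEq V]

theorem IsTournament.two_mul_card_induce (hT : IsTournament T) (P : Finset V) :
    2 * #(induce T P) = #P * (#P - 1) := by
  have hdisj : Disjoint (induce T P) ((induce T P).image Prod.swap) := by
    simp only [disjoint_left, mem_image, induce, mem_filter]
    rintro ⟨u, v⟩ ⟨huv, -⟩ ⟨⟨v', u'⟩, ⟨hvu, -⟩, h⟩
    obtain ⟨rfl, rfl⟩ := Prod.mk.inj h
    exact hT.swap_not_mem huv hvu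
  have hunion : induce T P ∪ (induce T P).image Prod.swap = P.offDiag := by
    ext ⟨u, v⟩
    simp only [mem_union, mem_image, induce, mem_filter, mem_offDiag, Prod.exists,
      Prod.swap_prod_mk, Prod.mk.injEq]
    constructor
    · rintro (⟨huv, hu, hv⟩ | ⟨v, u, ⟨hvu, hv, hu⟩, rfl, rfl⟩)
      · exact ⟨hu, hv, hT.ne_of_mem huv⟩
      · exact ⟨hu, hv, (hT.ne_of_mem hvu).symm⟩
    · rintro ⟨hu, hv, hne⟩
      rcases hT.mem_or_swap_mem hne with h | h
      · exact .inl ⟨h, hu, hv⟩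
      · exact .inr ⟨v, u, ⟨h, hv, hu⟩, rfl, rfl⟩
  have hcard := card_union_of_disjoint hdisj
  rw [hunion, offDiag_card, card_image_of_injective _ Prod.swap_injective] at hcard
  rw [Nat.mul_sub_one, hcard, two_mul]

theorem IsTournament.two_mul_sum_outDegInto (hT : IsTournament T) (P : Finset V) :
    2 * ∑ u ∈ P, outDegInto T u P = #P * (#P - 1) := by
  rw [sum_outDegInto_eq_card_induce, hT.two_mul_card_induce]

theorem IsTournament.sum_two_mul_outDegInto_add_one (hT : IsTournament T) (P : Finset V) :
    ∑ u ∈ P, (2 * outDegInto T u P + 1) = ∑ _u ∈ P, #P := by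
  rw [sum_add_distrib, ← mul_sum, hT.two_mul_sum_outDegInto, sum_const, sum_const, smul_eq_mul,
    smul_eq_mul, mul_one, Nat.mul_sub_one, Nat.sub_add_cancel (Nat.le_mul_self #P)]

theorem IsTournament.exists_card_le_two_mul_outDegInto_add_one (hT : IsTournament T)
    {P : Finset V} (hP : P.Nonempty) : ∃ u ∈ P, #P ≤ 2 * outDegInto T u P + 1 :=
  exists_le_of_sum_le hP (hT.sum_two_mul_outDegInto_add_one P).ge

theorem IsTournament.exists_two_mul_outDegInto_add_one_le (hT : IsTournament T)
    {P : Finset V} (hP : P.Nonempty) : ∃ u ∈ P, 2 * outDegInto T u P + 1 ≤ #P :=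
  exists_le_of_sum_le hP (hT.sum_two_mul_outDegInto_add_one P).le

end Tournament

theorem card_filter_add_card_filter_le {α : Type*} [DecidableEq α] (s : Finset α)
    (p q : α → Prop) [DecidablePred p] [DecidablePred q] (e : α)
    (hpq : ∀ a ∈ s, p a → q a → a = e) : #(s.filter p) + #(s.filter q) ≤ #s + 1 := by
  have hinter : s.filter p ∩ s.filter q ⊆ {e} := fun a ha => by
    simp only [mem_inter, mem_filter] at ha
    exact mem_singleton.2 (hpq a ha.1.1 ha.1.2 ha.2.2)
  rw [← card_union_add_card_inter]
  exact Nat.add_le_add (card_le_card (union_subset (filter_subset _ _) (filter_subset _ _)))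
    ((card_le_card hinter).trans_eq (card_singleton e))

section Cut

variable [DecidableEq V] {T A' : Finset (V × V)} {S : Finset V}
  (hcut : ∀ u v, u ∉ S → v ∈ S → (u, v) ∈ T → (u, v) ∈ A')
include hcut

theorem outDegInto_le_of_cut {y : V} (hy : y ∉ S) :
    outDegInto T y S ≤ #(A'.filter fun a => a.1 = y ∧ a.2 ∈ S) :=
  card_le_card fun a ha => by
    obtain ⟨haT, rfl, haS⟩ := mem_filter.1 ha
    exact mem_filter.2 ⟨hcut _ _ hy haS haT, rfl, haS⟩

variable [Fintype V] (hT : IsTournament T)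
include hT

theorem IsTournament.card_compl_le_of_cut {x : V} (hx : x ∈ S) :
    #Sᶜ ≤ outDegInto T x Sᶜ + #(A'.filter fun a => a.1 ∉ S ∧ a.2 = x) := by
  have hcover : Sᶜ ⊆ (T.filter fun a => a.1 = x ∧ a.2 ∈ Sᶜ).image Prod.snd ∪
      (A'.filter fun a => a.1 ∉ S ∧ a.2 = x).image Prod.fst := by
    intro u hu
    have hux : x ≠ u := by rintro rfl; exact mem_compl.1 hu hx
    simp only [mem_union, mem_image, mem_filter, Prod.exists]
    rcases hT.mem_or_swap_mem hux with h | h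
    · exact .inl ⟨x, u, ⟨h, rfl, hu⟩, rfl⟩
    · exact .inr ⟨u, x, ⟨hcut u x (mem_compl.1 hu) hx h, mem_compl.1 hu, rfl⟩, rfl⟩
  exact (card_le_card hcover).trans ((card_union_le _ _).trans
    (Nat.add_le_add card_image_le card_image_le))

theorem IsTournament.le_outDeg_sub_outDeg_of_cut {x y : V} (hx : x ∈ S) (hy : y ∉ S)
    {Q : Finset V} (hQ : Q ⊆ Sᶜ) :
    (outDegInto T x S : ℤ) + #Q - outDegInto T y Q - (#A' + 1) ≤ outDeg T x - outDeg T y := by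
  have hx' := hT.card_compl_le_of_cut hcut hx
  have hy' := outDegInto_le_of_cut hcut hy
  have hy'' := outDegInto_le_add_card_sdiff (D := T) y Q Sᶜ
  -- the only arc counted twice is `(y, x)`
  have hA' := card_filter_add_card_filter_le A' (fun a => a.1 ∉ S ∧ a.2 = x)
    (fun a => a.1 = y ∧ a.2 ∈ S) (y, x) fun a _ hax hay => Prod.ext hay.1 hax.2
  rw [card_sdiff_of_subset hQ] at hy''
  have hQS := card_le_card hQ
  rw [outDeg_eq_outDegInto_add_outDegInto_compl x S,
    outDeg_eq_outDegInto_add_outDegInto_compl y S]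
  omega

end Cut

theorem IsTournament.reach_sdiff_of_outDeg_close [Fintype V] [DecidableEq V]
    {T A' : Finset (V × V)} {k : ℕ} (hT : IsTournament T) (hk : #A' ≤ k) {X : Finset V}
    (hcard : 4 * k + 3 ≤ #X) (hdeg : ∀ x ∈ X, ∀ y ∈ X, (outDeg T x : ℤ) - outDeg T y ≤ k)
    {x y : V} (hx : x ∈ X) (hy : y ∈ X) : Reach (T \ A') y x := by
  classical
  by_contra hyx
  set S : Finset V := {v | Reach (T \ A') v x}
  have hcut : ∀ u v, u ∉ S → v ∈ S → (u, v) ∈ T → (u, v) ∈ A' := by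
    intro u v hu hv huv
    by_contra hA
    simp only [S, mem_filter, mem_univ, true_and] at hu hv
    exact hu (.head (mem_sdiff.2 ⟨huv, hA⟩) hv)
  set P := X.filter (· ∈ S)
  set Q := X.filter (· ∉ S)
  obtain ⟨x', hx'P, hx'⟩ := hT.exists_card_le_two_mul_outDegInto_add_one (P := P)
    ⟨x, mem_filter.2 ⟨hx, mem_filter.2 ⟨mem_univ x, .refl⟩⟩⟩
  obtain ⟨y', hy'Q, hy'⟩ := hT.exists_two_mul_outDegInto_add_one_le (P := Q)
    ⟨y, by simp [Q, S, hy, hyx]⟩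
  rw [mem_filter] at hx'P hy'Q
  have hgap := hT.le_outDeg_sub_outDeg_of_cut hcut hx'P.2 hy'Q.2 (Q := Q)
    fun v hv => mem_compl.2 (mem_filter.1 hv).2
  have hmono : outDegInto T x' P ≤ outDegInto T x' S :=
    outDegInto_mono fun v hv => (mem_filter.1 hv).2
  have hsplit : #P + #Q = #X := card_filter_add_card_filter_not _
  have := hdeg x' hx'P.1 y' hy'Q.1
  omega

end DescPaper

open DescPaper

theorem stmt1_general {V : Type*} [Fintype V] [DecidableEq V]
    (T A' : Finset (V × V)) (k : ℕ)
    (hT : IsTournament T) (hk : A'.card ≤ k)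
    (X : Finset V) (hcard : 4 * k + 3 ≤ X.card)
    (hdeg : ∀ x ∈ X, ∀ y ∈ X, (outDeg T x : ℤ) - outDeg T y ≤ k) :
    ∃ C : Finset V, IsStrongComponent (T \ A') C ∧ ∀ x ∈ X, x ∈ C :=
  exists_isStrongComponent_superset (Finset.card_pos.1 (by omega))
    fun x hx y hy => hT.reach_sdiff_of_outDeg_close hk hcard hdeg hy hx

/-- Lemma 2 of the paper. -/
theorem stmt1 {V : Type*} [Fintype V] [DecidableEq V]
    (T A' : Finset (V × V)) (k : ℕ)
    (hT : IsTournament T) (hDESC : IsDESC T A') (hk : A'.card ≤ k)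
    (X : Finset V) (hcard : 4 * k + 3 ≤ X.card)
    (hdeg : ∀ x ∈ X, ∀ y ∈ X, (outDeg T x : ℤ) - outDeg T y ≤ k) :
    ∃ C : Finset V, IsStrongComponent (T \ A') C ∧ ∀ x ∈ X, x ∈ C :=
  stmt1_general T A' k hT hk X hcard hdeg
end

section
/- Let T be a tournament on a finite vertex set, let k be a nonnegative integer, let A' be a DESC-set of T with |A'| ≤ k, and let T' = T − A'. If two vertices x and y belong to the same strong component of T', then |d⁺_T(x) − d⁺_T(y)| ≤ k. -/
/-!
Let `C` be the strong component of `T' = T \ A'` containing `x` and `y`, and split each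
out-degree into arcs inside `C` and arcs leaving `C`.

Inside `C`: as `T[C]` is a tournament, `2 d⁺_{T[C]}(w) = |C| - 1 + (d⁺ - d⁻)_{T[C]}(w)`, and as
`T'[C]` is balanced, the excess `d⁺ - d⁻` of `T[C]` at `w` equals that of `A'[C]`. Hence the inside
difference is at most the number of arcs of `A'` inside `C` at `x` or `y`.

Outside `C`: a vertex `z ∉ C` with `x → z → y` in `T'` would join the component, so whenever
`x → z` but not `y → z` in `T`, one of the arcs `xz`, `zy` lies in `A'`. Hence the outside
difference is at most the number of arcs of `A'` between `{x, y}` and the complement of `C`.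
These two sets of arcs of `A'` are disjoint, so together they number at most `|A'| ≤ k`.
-/

namespace DescPaper

open Finset

variable {V : Type*} [DecidableEq V]

section Degrees

variable (D : Finset (V × V)) (x : V) (C : Finset V)

lemma outDegInto_eq_card_filter (Y : Finset V) :
    outDegInto D x Y = #{z ∈ Y | (x, z) ∈ D} := by
  refine card_nbij' Prod.snd (fun z => (x, z)) ?_ ?_ ?_ ?_
  · rintro ⟨u, v⟩ h
    simp only [coe_filter, Set.mem_ofPred_eq] at h ⊢
    exact ⟨h.2.2, h.2.1 ▸ h.1⟩
  · intro z h
    simp_all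
  · rintro ⟨u, v⟩ h
    simp_all
  · intro z _
    rfl

lemma outDeg_induce (hx : x ∈ C) : outDeg (induce D C) x = outDegInto D x C := by
  simp only [outDeg, outDegInto, induce, filter_filter]
  congr 1
  exact filter_congr fun a _ => by constructor <;> rintro ⟨h₁, h₂⟩ <;> simp_all

lemma inDeg_induce (hx : x ∈ C) : inDeg (induce D C) x = #{z ∈ C | (z, x) ∈ D} := by
  refine card_nbij' Prod.fst (fun z => (z, x)) ?_ ?_ ?_ ?_
  · rintro ⟨u, v⟩ h
    simp only [induce, filter_filter, coe_filter, Set.mem_ofPred_eq] at h ⊢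
    exact ⟨h.2.1.1, h.2.2 ▸ h.1⟩
  · intro z h
    simp_all [induce]
  · rintro ⟨u, v⟩ h
    simp_all [induce]
  · intro z _
    rfl

lemma outDeg_eq_outDegInto_add_compl [Fintype V] :
    outDeg D x = outDegInto D x C + outDegInto D x Cᶜ := by
  rw [outDeg, ← card_filter_add_card_filter_not (fun a => a.2 ∈ C)]
  simp only [outDegInto, filter_filter, mem_compl]

lemma outDeg_sdiff_add {E : Finset (V × V)} (hE : E ⊆ D) :
    outDeg (D \ E) x + outDeg E x = outDeg D x := by
  simp only [outDeg, card_filter]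
  exact sum_sdiff hE

lemma inDeg_sdiff_add {E : Finset (V × V)} (hE : E ⊆ D) :
    inDeg (D \ E) x + inDeg E x = inDeg D x := by
  simp only [inDeg, card_filter]
  exact sum_sdiff hE

lemma induce_sdiff (E : Finset (V × V)) : induce (D \ E) C = induce D C \ induce E C := by
  ext a; simp only [induce, mem_filter, mem_sdiff]; tauto

end Degrees

lemma IsTournament.outDeg_add_inDeg_induce {T : Finset (V × V)} (hT : IsTournament T)
    {C : Finset V} {x : V} (hx : x ∈ C) :
    outDeg (induce T C) x + inDeg (induce T C) x + 1 = #C := by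
  have hout : {z ∈ C | (x, z) ∈ T} = {z ∈ C.erase x | (x, z) ∈ T} := by
    ext z; by_cases hz : z = x <;> simp_all [hT.1]
  have hin : {z ∈ C | (z, x) ∈ T} = {z ∈ C.erase x | (x, z) ∉ T} := by
    ext z
    rcases eq_or_ne z x with rfl | hz
    · simp [hT.1]
    · simp [hz, hT.2 x z hz.symm]
  rw [outDeg_induce _ _ _ hx, inDeg_induce _ _ _ hx, outDegInto_eq_card_filter, hout, hin,
    card_filter_add_card_filter_not, card_erase_add_one hx]

lemma IsStrongComponent.mem_of_arc_of_arc {D : Finset (V × V)} {C : Finset V}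
    (hC : IsStrongComponent D C) {x y z : V} (hx : x ∈ C) (hy : y ∈ C)
    (hxz : (x, z) ∈ D) (hzy : (z, y) ∈ D) : z ∈ C := by
  obtain ⟨-, hconn, hmax⟩ := hC
  have reach_mono {u v : V} (h : Reach (induce D C) u v) : Reach (induce D (insert z C)) u v :=
    Relation.ReflTransGen.mono (fun a b (hab : (a, b) ∈ induce D C) => by
      simp only [induce, mem_filter, mem_insert] at hab ⊢
      tauto) u v h
  have to_z : ∀ u ∈ C, Reach (induce D (insert z C)) u z := fun u hu =>
    (reach_mono (hconn u hu x hx)).tail (by simp [induce, hxz, hx])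
  have from_z : ∀ v ∈ C, Reach (induce D (insert z C)) z v := fun v hv =>
    Relation.ReflTransGen.head (by simp [induce, hzy, hy]) (reach_mono (hconn y hy v hv))
  have hconn' : StronglyConnectedOn D (insert z C) := by
    intro u hu v hv
    rcases mem_insert.mp hu with rfl | huC
    · rcases mem_insert.mp hv with rfl | hvC
      exacts [.refl, from_z v hvC]
    · rcases mem_insert.mp hv with rfl | hvC
      exacts [to_z u huC, reach_mono (hconn u huC v hvC)]
  exact hmax _ (subset_insert z C) hconn' ▸ mem_insert_self z C

lemma abs_outDeg_sub_inDeg_sub_le_dstar [Fintype V] (D : Finset (V × V)) (x y : V) :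
    |((outDeg D x : ℤ) - inDeg D x) - (outDeg D y - inDeg D y)| ≤ 2 * dstar D {x, y} univ := by
  simp only [outDeg, inDeg, dstar, natCast_card_filter, ← sum_sub_distrib, mul_sum]
  refine (abs_sum_le_sum_abs _ _).trans (sum_le_sum fun a _ => ?_)
  simp only [mem_insert, mem_singleton, mem_univ, and_true, true_and]
  split_ifs <;> simp_all

lemma dstar_add_dstar_compl_le_card [Fintype V] (A : Finset (V × V)) {X Y : Finset V}
    (hXY : X ⊆ Y) : dstar A X Y + dstar A X Yᶜ ≤ #A := by
  rw [dstar, dstar, ← card_union_of_disjoint]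
  · exact card_le_card (union_subset (filter_subset _ _) (filter_subset _ _))
  · refine disjoint_filter.2 fun a _ h₁ h₂ => ?_
    have := @hXY a.1
    have := @hXY a.2
    simp only [mem_compl] at h₂
    tauto

section Component

variable {T A' : Finset (V × V)} {C : Finset V} {x y : V}

lemma IsTournament.two_mul_outDegInto_eq (hT : IsTournament T) (hA' : A' ⊆ T)
    (hbal : IsBalanced (induce (T \ A') C)) (hx : x ∈ C) :
    2 * (outDegInto T x C : ℤ) =
      #C - 1 + ((outDeg (induce A' C) x : ℤ) - inDeg (induce A' C) x) := by
  have hsub : induce A' C ⊆ induce T C := filter_subset_filter _ hA'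
  have hout := outDeg_sdiff_add _ x hsub
  have hin := inDeg_sdiff_add _ x hsub
  rw [← induce_sdiff, hbal x] at hout
  rw [← induce_sdiff] at hin
  have htot := hT.outDeg_add_inDeg_induce hx
  rw [outDeg_induce T _ _ hx] at hout htot
  omega

lemma IsTournament.abs_outDegInto_sub_le_dstar [Fintype V] (hT : IsTournament T) (hA' : A' ⊆ T)
    (hbal : IsBalanced (induce (T \ A') C)) (hx : x ∈ C) (hy : y ∈ C) :
    |(outDegInto T x C : ℤ) - outDegInto T y C| ≤ dstar A' {x, y} C := by
  have hexc := abs_outDeg_sub_inDeg_sub_le_dstar (induce A' C) x y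
  have hle : dstar (induce A' C) {x, y} univ ≤ dstar A' {x, y} C :=
    card_le_card fun a ha => by
      simp only [induce, mem_filter, mem_univ, and_true, true_and] at ha ⊢
      tauto
  have hdiff : 2 * ((outDegInto T x C : ℤ) - outDegInto T y C) =
      ((outDeg (induce A' C) x : ℤ) - inDeg (induce A' C) x)
        - (outDeg (induce A' C) y - inDeg (induce A' C) y) := by
    rw [mul_sub, hT.two_mul_outDegInto_eq hA' hbal hx, hT.two_mul_outDegInto_eq hA' hbal hy]
    ring
  rw [← hdiff, abs_mul, abs_two] at hexc
  have : (dstar (induce A' C) {x, y} univ : ℤ) ≤ dstar A' {x, y} C := by exact_mod_cast hle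
  linarith

lemma IsStrongComponent.outDegInto_compl_le [Fintype V] (hC : IsStrongComponent (T \ A') C)
    (hT : IsTournament T) (hx : x ∈ C) (hy : y ∈ C) :
    outDegInto T x Cᶜ ≤ outDegInto T y Cᶜ + dstar A' {x, y} Cᶜ := by
  rw [outDegInto_eq_card_filter, outDegInto_eq_card_filter, add_comm]
  refine card_le_card_sdiff_add_card.trans (Nat.add_le_add_right ?_ _)
  refine card_le_card_of_surjOn (fun a => if a.1 ∈ C then a.2 else a.1) fun z hz => ?_
  simp only [coe_sdiff, coe_filter, Set.mem_sdiff, Set.mem_ofPred_eq, mem_compl, not_and] at hz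
  obtain ⟨⟨hzC, hxz⟩, hyz⟩ := hz
  have hzy : (z, y) ∈ T := (hT.2 z y fun h => hzC (h ▸ hy)).2 (hyz hzC)
  by_cases hxzA : (x, z) ∈ A'
  · exact ⟨(x, z), by simp [hxzA, hx, hzC], by simp [hx]⟩
  · have hzyA : (z, y) ∈ A' := by
      by_contra h
      exact hzC (hC.mem_of_arc_of_arc hx hy (mem_sdiff.2 ⟨hxz, hxzA⟩) (mem_sdiff.2 ⟨hzy, h⟩))
    exact ⟨(z, y), by simp [hzyA, hzC], by simp [hzC]⟩

lemma IsStrongComponent.abs_outDegInto_compl_sub_le_dstar [Fintype V]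
    (hC : IsStrongComponent (T \ A') C) (hT : IsTournament T) (hx : x ∈ C) (hy : y ∈ C) :
    |(outDegInto T x Cᶜ : ℤ) - outDegInto T y Cᶜ| ≤ dstar A' {x, y} Cᶜ := by
  have hxy := hC.outDegInto_compl_le hT hx hy
  have hyx := hC.outDegInto_compl_le hT hy hx
  rw [pair_comm] at hyx
  rw [abs_sub_le_iff]
  omega

end Component

end DescPaper

open DescPaper

/-- Lemma 3 of the paper. -/
theorem stmt2 {V : Type*} [Fintype V] [DecidableEq V]
    (T A' : Finset (V × V)) (k : ℕ)
    (hT : IsTournament T) (hDESC : IsDESC T A') (hk : A'.card ≤ k)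
    (x y : V)
    (hsame : ∃ C : Finset V, IsStrongComponent (T \ A') C ∧ x ∈ C ∧ y ∈ C) :
    |(outDeg T x : ℤ) - outDeg T y| ≤ k := by
  obtain ⟨C, hC, hx, hy⟩ := hsame
  have hin := hT.abs_outDegInto_sub_le_dstar hDESC.1 (hDESC.2 C hC).2 hx hy
  have hout := hC.abs_outDegInto_compl_sub_le_dstar hT hx hy
  have hA' := dstar_add_dstar_compl_le_card A'
    (Finset.insert_subset hx (Finset.singleton_subset_iff.2 hy))
  rw [outDeg_eq_outDegInto_add_compl T x C, outDeg_eq_outDegInto_add_compl T y C]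
  calc _ = |((outDegInto T x C : ℤ) - outDegInto T y C)
          + ((outDegInto T x Cᶜ : ℤ) - outDegInto T y Cᶜ)| := by push_cast; ring_nf
    _ ≤ dstar A' {x, y} C + dstar A' {x, y} Cᶜ := (abs_add_le _ _).trans (add_le_add hin hout)
    _ ≤ k := by exact_mod_cast hA'.trans hk
end
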